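/- Let S be a set and f : S → M_n(ℝ) an injective map. Let w₁,…,w_N > 0, x₁,…,x_N ∈ ℝ^d, Y₁,…,Y_N ∈ S, and let zᵢ = (1, xᵢ) ∈ ℝ^{1+d}. Assume the Gram matrix G = Σᵢ wᵢ zᵢ zᵢᵀ is invertible, and let (β̂₀, B̂) be the unique minimizer of (β₀, B) ↦ Σᵢ wᵢ ‖β₀ + B(I_n ⊗ xᵢ) − f(Yᵢ)‖_F² over β₀ ∈ M_n(ℝ) and block matrices B ∈ M_{n, n·d}(ℝ) acting as B(I_n ⊗ xᵢ). If β̂₀ ∈ f(S), then the intrinsic problem min over (α₀, B) ∈ S × M_{n,n·d}(ℝ) of Σᵢ wᵢ ‖f(α₀) + B(I_n ⊗ xᵢ) − f(Yᵢ)‖_F² attains its minimum exactly at α̂₀ = f⁻¹(β̂₀) together with B̂. -/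
import Mathlib


open Matrix
open scoped BigOperators

/-- The squared Frobenius norm of a matrix. -/
def frobSq {n : ℕ} (M : Matrix (Fin n) (Fin n) ℝ) : ℝ :=
  ∑ a, ∑ b, (M a b) ^ 2

/-- The Kronecker product `I_n ⊗ xᵢ ∈ M_{n·d, n}(ℝ)` of the identity with the
column vector `xᵢ ∈ ℝ^d`: entry `((a,k), b) = δ_{ab} · xᵢ_k`. -/
def idKron {n d : ℕ} (u : Fin d → ℝ) : Matrix (Fin n × Fin d) (Fin n) ℝ :=
  fun p b => if p.1 = b then u p.2 else 0

/-- Intrinsic local linear estimator for a Euclidean pullback metric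
(Theorem 3, multivariate local linear case): if `(β̂₀, B̂)` is the unique
minimizer of the Euclidean weighted least squares problem
`(β₀, B) ↦ Σᵢ wᵢ ‖β₀ + B (I_n ⊗ xᵢ) − f(Yᵢ)‖_F²` (with the weighted Gram matrix
of the `zᵢ = (1, xᵢ)` invertible) and `β̂₀` lies in the image of the injective
map `f : S → M_n(ℝ)`, then the intrinsic problem
`(α₀, B) ↦ Σᵢ wᵢ ‖f(α₀) + B (I_n ⊗ xᵢ) − f(Yᵢ)‖_F²` attains its minimum exactly
at `(α̂₀, B̂)` where `f(α̂₀) = β̂₀`, i.e. `α̂₀ = f⁻¹(β̂₀)`. -/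
theorem intrinsic_local_linear_estimator {S : Type*} {N n d : ℕ}
    (f : S → Matrix (Fin n) (Fin n) ℝ) (hf : Function.Injective f)
    (w : Fin N → ℝ) (hw : ∀ i, 0 < w i)
    (x : Fin N → (Fin d → ℝ)) (Y : Fin N → S)
    (hG : IsUnit (∑ i, w i •
      vecMulVec (Sum.elim (fun _ : Unit => (1 : ℝ)) (x i))
        (Sum.elim (fun _ : Unit => (1 : ℝ)) (x i))))
    (βhat₀ : Matrix (Fin n) (Fin n) ℝ) (Bhat : Matrix (Fin n) (Fin n × Fin d) ℝ)
    (hmin : ∀ p : Matrix (Fin n) (Fin n) ℝ × Matrix (Fin n) (Fin n × Fin d) ℝ,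
      p ≠ (βhat₀, Bhat) →
      (∑ i, w i * frobSq (βhat₀ + Bhat * idKron (x i) - f (Y i))) <
        (∑ i, w i * frobSq (p.1 + p.2 * idKron (x i) - f (Y i))))
    (αhat₀ : S) (hα : f αhat₀ = βhat₀) :
    letI Eint : S × Matrix (Fin n) (Fin n × Fin d) ℝ → ℝ :=
      fun q => ∑ i, w i * frobSq (f q.1 + q.2 * idKron (x i) - f (Y i))
    (∀ q, Eint (αhat₀, Bhat) ≤ Eint q) ∧
    (∀ q, q ≠ (αhat₀, Bhat) → Eint (αhat₀, Bhat) < Eint q) := by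
  have key : ∀ q : S × Matrix (Fin n) (Fin n × Fin d) ℝ, q ≠ (αhat₀, Bhat) →
      (∑ i, w i * frobSq (f αhat₀ + Bhat * idKron (x i) - f (Y i))) <
        (∑ i, w i * frobSq (f q.1 + q.2 * idKron (x i) - f (Y i))) := by
    intro q hq
    have hne : (f q.1, q.2) ≠ (βhat₀, Bhat) := by
      intro h
      apply hq
      have h1 := congrArg Prod.fst h
      have h2 := congrArg Prod.snd h
      simp only at h1 h2
      have : q.1 = αhat₀ := hf (by rw [h1, hα])
      exact Prod.ext this h2
    have := hmin (f q.1, q.2) hne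
    simpa [hα] using this
  refine ⟨fun q => ?_, key⟩
  by_cases hq : q = (αhat₀, Bhat)
  · exact le_of_eq (by rw [hq])
  · exact (key q hq).le
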